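/- Under the hypotheses of Proposition 4 (x̂ > 0, σ̂ > 0, all rows a_i of A nonzero), if min_{1≤i≤n} x̂_i ≥ min_{1≤i≤m} σ̂_i/‖a_i‖₁ and p attains min_{1≤i≤m} σ̂_i/‖a_i‖₁, then y* = -e_p/‖a_p‖₁, c* = -a_p/‖a_p‖₁, ε* = 0, ε^{σ*}_p = σ̂_p/‖a_p‖₁, ε^{σ*}_i = 0 for i ≠ p is feasible for [IOP2(x̂, σ̂)] with objective value σ̂_p/‖a_p‖₁, and no feasible solution has a strictly smaller objective. -/

import Mathlib

open Matrix

/-!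
Every feasible point of [IOP2] has `y = -εσ / σ̂` and `c = Aᵀ y + ε / x̂` with `‖c‖₁ = 1`, so
`1 ≤ ∑ᵢ εσᵢ ‖aᵢ‖₁ / σ̂ᵢ + ∑ⱼ εⱼ / x̂ⱼ`. Each coefficient `‖aᵢ‖₁ / σ̂ᵢ` and `1 / x̂ⱼ` is at most
`1 / t` for `t = σ̂ₚ / ‖aₚ‖₁`, so the objective is at least `t`, which the closed-form point attains.
-/

open Finset

section

variable {m n : Type*} [Fintype m] [Fintype n]

theorem sum_abs_transpose_mulVec_le (A : Matrix m n ℝ) (y : m → ℝ) :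
    ∑ j, |(Aᵀ *ᵥ y) j| ≤ ∑ i, |y i| * ∑ j, |A i j| :=
  calc ∑ j, |(Aᵀ *ᵥ y) j| ≤ ∑ j, ∑ i, |A i j| * |y i| :=
        sum_le_sum fun j _ => by
          simpa only [mulVec, dotProduct, transpose_apply, abs_mul] using
            abs_sum_le_sum_abs (fun i => A i j * y i) univ
    _ = ∑ i, |y i| * ∑ j, |A i j| := by
        rw [sum_comm]
        simp_rw [mul_sum, mul_comm]

structure IOP2Feasible (A : Matrix m n ℝ) (xhat : n → ℝ) (σhat : m → ℝ)
    (y : m → ℝ) (c ε : n → ℝ) (εσ : m → ℝ) : Prop where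
  dual_eq : ∀ j, (Aᵀ *ᵥ y) j + ε j / xhat j = c j
  slack_eq : ∀ i, y i + εσ i / σhat i = 0
  norm_cost : ∑ j, |c j| = 1
  ε_nonneg : ∀ j, 0 ≤ ε j
  εσ_nonneg : ∀ i, 0 ≤ εσ i

theorem IOP2Feasible.le_objective {A : Matrix m n ℝ} {xhat : n → ℝ} {σhat : m → ℝ}
    {y : m → ℝ} {c ε : n → ℝ} {εσ : m → ℝ} (h : IOP2Feasible A xhat σhat y c ε εσ)
    {t : ℝ} (ht : 0 < t) (hσ : ∀ i, 0 < σhat i) (hrow : ∀ i, t ≤ σhat i / ∑ j, |A i j|)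
    (hx : ∀ j, t ≤ xhat j) :
    t ≤ ∑ j, ε j + ∑ i, εσ i := by
  have hy : ∀ i, |y i| = εσ i / σhat i := fun i => by
    rw [eq_neg_of_add_eq_zero_left (h.slack_eq i), abs_neg,
      abs_of_nonneg (div_nonneg (h.εσ_nonneg i) (hσ i).le)]
  have hdiv : ∀ j, 0 ≤ ε j / xhat j := fun j =>
    div_nonneg (h.ε_nonneg j) (ht.trans_le (hx j)).le
  suffices 1 ≤ t⁻¹ * (∑ j, ε j + ∑ i, εσ i) by rwa [le_inv_mul_iff₀ ht, mul_one] at this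
  calc (1 : ℝ) = ∑ j, |(Aᵀ *ᵥ y) j + ε j / xhat j| := by simp only [h.dual_eq, h.norm_cost]
    _ ≤ ∑ j, (|(Aᵀ *ᵥ y) j| + ε j / xhat j) :=
        sum_le_sum fun j _ => (abs_add_le _ _).trans_eq (by rw [abs_of_nonneg (hdiv j)])
    _ ≤ ∑ i, |y i| * ∑ j, |A i j| + ∑ j, ε j / xhat j := by
        rw [sum_add_distrib]
        exact add_le_add_left (sum_abs_transpose_mulVec_le A y) _
    _ = ∑ i, εσ i * (σhat i / ∑ j, |A i j|)⁻¹ + ∑ j, ε j * (xhat j)⁻¹ := by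
        congr 1
        exact sum_congr rfl fun i _ => by rw [hy, inv_div]; ring
    _ ≤ ∑ i, εσ i * t⁻¹ + ∑ j, ε j * t⁻¹ :=
        add_le_add
          (sum_le_sum fun i _ => mul_le_mul_of_nonneg_left (inv_anti₀ ht (hrow i)) (h.εσ_nonneg i))
          (sum_le_sum fun j _ => mul_le_mul_of_nonneg_left (inv_anti₀ ht (hx j)) (h.ε_nonneg j))
    _ = t⁻¹ * (∑ j, ε j + ∑ i, εσ i) := by rw [← sum_mul, ← sum_mul]; ring

end

theorem stmt_9_general (m n : ℕ) (A : Matrix (Fin m) (Fin n) ℝ) (hrows : ∀ i, ∑ j, |A i j| ≠ 0)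
    (xhat : Fin n → ℝ)
    (σhat : Fin m → ℝ) (hσ : ∀ i, 0 < σhat i)
    (p : Fin m)
    (hpmin : ∀ i, σhat p / ∑ j, |A p j| ≤ σhat i / ∑ j, |A i j|)
    (hcase : ∀ j, σhat p / ∑ j', |A p j'| ≤ xhat j)
    (ystar : Fin m → ℝ) (hy : ystar = fun i => if i = p then -(1 / ∑ j, |A p j|) else 0)
    (cstar : Fin n → ℝ) (hc : cstar = fun j => -(A p j) / ∑ j', |A p j'|)
    (εstar : Fin n → ℝ) (hε : εstar = 0)
    (εσstar : Fin m → ℝ)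
    (hεσ : εσstar = fun i => if i = p then σhat p / ∑ j, |A p j| else 0) :
    -- feasibility
    ((∀ j, Aᵀ.mulVec ystar j + εstar j / xhat j = cstar j) ∧
     (∀ i, ystar i + εσstar i / σhat i = 0) ∧
     (∑ j, |cstar j| = 1) ∧
     (∀ j, 0 ≤ εstar j) ∧ (∀ i, 0 ≤ εσstar i)) ∧
    -- objective value
    (∑ j, εstar j + ∑ i, εσstar i = σhat p / ∑ j, |A p j|) ∧
    -- no feasible solution has a strictly smaller objective
    (∀ (y : Fin m → ℝ) (c ε : Fin n → ℝ) (εσ : Fin m → ℝ),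
      (∀ j, Aᵀ.mulVec y j + ε j / xhat j = c j) →
      (∀ i, y i + εσ i / σhat i = 0) →
      (∑ j, |c j| = 1) →
      (∀ j, 0 ≤ ε j) → (∀ i, 0 ≤ εσ i) →
      σhat p / ∑ j, |A p j| ≤ ∑ j, ε j + ∑ i, εσ i) := by
  have hSp : 0 < ∑ j, |A p j| :=
    (sum_nonneg fun j _ => abs_nonneg (A p j)).lt_of_ne' (hrows p)
  have ht : 0 < σhat p / ∑ j, |A p j| := div_pos (hσ p) hSp
  subst hy hc hε hεσ
  refine ⟨⟨fun j => ?_, fun i => ?_, ?_, fun _ => le_rfl, fun i => ?_⟩, by simp, ?_⟩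
  · simp [mulVec, dotProduct, div_eq_mul_inv]
  · dsimp only
    split_ifs with hi
    · subst hi
      field_simp [(hσ i).ne']
      ring
    · simp
  · simp only [abs_div, abs_neg, abs_of_pos hSp, ← sum_div]
    exact div_self hSp.ne'
  · dsimp only
    split_ifs
    exacts [ht.le, le_rfl]
  · exact fun y c ε εσ h₁ h₂ h₃ h₄ h₅ =>
      IOP2Feasible.le_objective ⟨h₁, h₂, h₃, h₄, h₅⟩ ht hσ hpmin hcase

/-- Proposition 4(b): when the slack-based bound dominates, the closed-form solution
y* = -e_p/‖a_p‖₁, c* = -a_p/‖a_p‖₁, ε* = 0, ε^σ*_p = σ̂_p/‖a_p‖₁ (0 elsewhere)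
is feasible for [IOP2(x̂, σ̂)] with objective σ̂_p/‖a_p‖₁, and no feasible solution
does strictly better. -/
theorem stmt_9 (m n : ℕ) (A : Matrix (Fin m) (Fin n) ℝ) (hrows : ∀ i, ∑ j, |A i j| ≠ 0)
    (xhat : Fin n → ℝ) (hx : ∀ j, 0 < xhat j)
    (σhat : Fin m → ℝ) (hσ : ∀ i, 0 < σhat i)
    (p : Fin m)
    (hpmin : ∀ i, σhat p / ∑ j, |A p j| ≤ σhat i / ∑ j, |A i j|)
    (hcase : ∀ j, σhat p / ∑ j', |A p j'| ≤ xhat j)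
    (ystar : Fin m → ℝ) (hy : ystar = fun i => if i = p then -(1 / ∑ j, |A p j|) else 0)
    (cstar : Fin n → ℝ) (hc : cstar = fun j => -(A p j) / ∑ j', |A p j'|)
    (εstar : Fin n → ℝ) (hε : εstar = 0)
    (εσstar : Fin m → ℝ)
    (hεσ : εσstar = fun i => if i = p then σhat p / ∑ j, |A p j| else 0) :
    -- feasibility
    ((∀ j, Aᵀ.mulVec ystar j + εstar j / xhat j = cstar j) ∧
     (∀ i, ystar i + εσstar i / σhat i = 0) ∧
     (∑ j, |cstar j| = 1) ∧
     (∀ j, 0 ≤ εstar j) ∧ (∀ i, 0 ≤ εσstar i)) ∧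
    -- objective value
    (∑ j, εstar j + ∑ i, εσstar i = σhat p / ∑ j, |A p j|) ∧
    -- no feasible solution has a strictly smaller objective
    (∀ (y : Fin m → ℝ) (c ε : Fin n → ℝ) (εσ : Fin m → ℝ),
      (∀ j, Aᵀ.mulVec y j + ε j / xhat j = c j) →
      (∀ i, y i + εσ i / σhat i = 0) →
      (∑ j, |c j| = 1) →
      (∀ j, 0 ≤ ε j) → (∀ i, 0 ≤ εσ i) →
      σhat p / ∑ j, |A p j| ≤ ∑ j, ε j + ∑ i, εσ i) :=
  stmt_9_general m n A hrows xhat σhat hσ p hpmin hcase ystar hy cstar hc εstar hε εσstar hεσ
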